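/- If $A$ is a left $B$-module algebra over a bialgebra $B$, then the crossed product $A^e \rtimes B := A \otimes A^{op} \otimes B$ with multiplication $(a_1\otimes a_1'\otimes b^1)(a_2\otimes a_2'\otimes b^2) = a_1 b^1_{(1)}(a_2)\otimes b^1_{(3)}(a_2')a_1'\otimes b^1_{(2)}b^2$ is a unital associative algebra. -/

import Mathlib

open TensorProduct MulOpposite

noncomputable section

variable (k : Type*) [Field k]

def IsModuleAlgebra (B A : Type*) [Ring B] [Bialgebra k B]
    [Ring A] [Algebra k A] [Module B A] : Prop :=
  (∀ (b : B) (a₁ a₂ : A) (n : ℕ) (x y : Fin n → B),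
      Coalgebra.comul (R := k) b = ∑ i, x i ⊗ₜ[k] y i →
      b • (a₁ * a₂) = ∑ i, (x i • a₁) * (y i • a₂)) ∧
  ∀ b : B, b • (1 : A) = Coalgebra.counit (R := k) b • (1 : A)

set_option linter.unusedSectionVars false
set_option maxHeartbeats 1000000

section CPAux

open Coalgebra

variable (B : Type*) [Ring B] [Bialgebra k B]

namespace CP

local notation "Δ" => Coalgebra.comul (R := k) (A := B)

def D2' : B →ₗ[k] (B ⊗[k] B) ⊗[k] B := (Δ).rTensor B ∘ₗ Δ
abbrev R3 : B →ₗ[k] B ⊗[k] (B ⊗[k] B) := (Δ).lTensor B ∘ₗ Δ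
abbrev R4 : B →ₗ[k] B ⊗[k] (B ⊗[k] (B ⊗[k] B)) := (R3 k B).lTensor B ∘ₗ Δ
abbrev R5 : B →ₗ[k] B ⊗[k] (B ⊗[k] (B ⊗[k] (B ⊗[k] B))) := (R4 k B).lTensor B ∘ₗ Δ

lemma R4_eq : R4 k B = ((Δ).lTensor B).lTensor B ∘ₗ R3 k B := by
  rw [show R4 k B = (R3 k B).lTensor B ∘ₗ Δ from rfl, LinearMap.lTensor_comp]; rfl

abbrev alphaE := TensorProduct.assoc k B B B
abbrev tau : (B ⊗[k] B) ⊗[k] B ≃ₗ[k] B ⊗[k] (B ⊗[k] B) :=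
  (alphaE k B).trans (TensorProduct.leftComm k B B B)
def sig3 : (B ⊗[k] ((B ⊗[k] B) ⊗[k] B)) ⊗[k] B ≃ₗ[k]
    ((B ⊗[k] B) ⊗[k] B) ⊗[k] (B ⊗[k] B) :=
  (TensorProduct.assoc k B ((B ⊗[k] B) ⊗[k] B) B).trans
    (TensorProduct.leftComm k B ((B ⊗[k] B) ⊗[k] B) B)

@[simp] lemma sig3_tmul (x : B) (s : (B ⊗[k] B) ⊗[k] B) (z : B) :
    sig3 k B ((x ⊗ₜ[k] s) ⊗ₜ[k] z) = s ⊗ₜ[k] (x ⊗ₜ[k] z) := by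
  simp [sig3]

abbrev zeta := TensorProduct.leftComm k B (B ⊗[k] B) B
abbrev rho := (TensorProduct.assoc k B B (B ⊗[k] B)).symm
abbrev rho2 := (TensorProduct.assoc k B B (B ⊗[k] (B ⊗[k] B))).symm
abbrev kappa := (TensorProduct.assoc k (B ⊗[k] B) B (B ⊗[k] B)).symm

abbrev PN3e : B ⊗[k] ((B ⊗[k] B) ⊗[k] (B ⊗[k] B)) ≃ₗ[k]
    ((B ⊗[k] B) ⊗[k] B) ⊗[k] (B ⊗[k] B) :=
  (TensorProduct.congr (LinearEquiv.refl k B)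
      (TensorProduct.assoc k (B ⊗[k] B) B B).symm).trans
    (TensorProduct.leftComm k B ((B ⊗[k] B) ⊗[k] B) B)

def sig1 : ((B ⊗[k] B) ⊗[k] B) ⊗[k] (B ⊗[k] B) ≃ₗ[k]
    ((B ⊗[k] B) ⊗[k] B) ⊗[k] (B ⊗[k] B) :=
  (TensorProduct.congr (alphaE k B) (LinearEquiv.refl k (B ⊗[k] B))).trans
    ((TensorProduct.assoc k B (B ⊗[k] B) (B ⊗[k] B)).trans
      ((TensorProduct.congr (LinearEquiv.refl k B)
          (TensorProduct.assoc k (B ⊗[k] B) B B).symm).trans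
        (TensorProduct.leftComm k B ((B ⊗[k] B) ⊗[k] B) B)))

@[simp] lemma sig1_tmul (e1 e2 e3 e4 e5 : B) :
    sig1 k B (((e1 ⊗ₜ[k] e2) ⊗ₜ[k] e3) ⊗ₜ[k] (e4 ⊗ₜ[k] e5))
      = ((e2 ⊗ₜ[k] e3) ⊗ₜ[k] e4) ⊗ₜ[k] (e1 ⊗ₜ[k] e5) := by
  simp [sig1]

-- permutation naturality lemmas (map-level, ext-provable)
lemma PN0 : (sig3 k B).toLinearMap ∘ₗ ((D2' k B).lTensor B).rTensor B
    = (D2' k B).rTensor (B ⊗[k] B) ∘ₗ (tau k B).toLinearMap := by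
  ext x y z
  simp

lemma PN1 : (Δ).rTensor (B ⊗[k] B) ∘ₗ (TensorProduct.leftComm k B B B).toLinearMap
    = (zeta k B).toLinearMap ∘ₗ ((Δ).rTensor B).lTensor B := by
  ext x y z
  simp

lemma PN2 : ((Δ).lTensor (B ⊗[k] B)) ∘ₗ (alphaE k B).symm.toLinearMap
    = (rho k B).toLinearMap ∘ₗ ((Δ).lTensor B).lTensor B := by
  ext x y z
  simp

lemma PN2' : ((R3 k B).lTensor (B ⊗[k] B)) ∘ₗ (alphaE k B).symm.toLinearMap
    = (rho2 k B).toLinearMap ∘ₗ ((R3 k B).lTensor B).lTensor B := by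
  ext x y z
  simp

lemma R5_eq : R5 k B = ((R3 k B).lTensor B).lTensor B ∘ₗ R3 k B := by
  rw [show R5 k B = (R4 k B).lTensor B ∘ₗ Δ from rfl,
    show R4 k B = (R3 k B).lTensor B ∘ₗ Δ from rfl, LinearMap.lTensor_comp]; rfl

lemma PN3claim : ((Δ).rTensor B).rTensor (B ⊗[k] B) ∘ₗ (zeta k B).toLinearMap
      ∘ₗ LinearMap.lTensor B (alphaE k B).symm.toLinearMap
    = (PN3e k B).toLinearMap ∘ₗ LinearMap.lTensor B ((Δ).rTensor (B ⊗[k] B)) := by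
  ext w x y z
  simp

lemma PNkappa : ((Δ).rTensor B).rTensor (B ⊗[k] B) ∘ₗ (rho k B).toLinearMap
    = (kappa k B).toLinearMap ∘ₗ (Δ).rTensor (B ⊗[k] (B ⊗[k] B)) := by
  ext x y z
  simp

lemma PN6 : (PN3e k B).toLinearMap ∘ₗ LinearMap.lTensor B (rho k B).toLinearMap
    = (sig1 k B).toLinearMap ∘ₗ (kappa k B).toLinearMap ∘ₗ (rho2 k B).toLinearMap := by
  ext v w x y z
  simp [sig1]

-- generalized coassociativity steps
lemma GC1 : (Δ).rTensor (B ⊗[k] B) ∘ₗ R3 k B = (rho k B).toLinearMap ∘ₗ R4 k B := by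
  have h1 : (Δ).rTensor (B ⊗[k] B) ∘ₗ (Δ).lTensor B
      = (Δ).lTensor (B ⊗[k] B) ∘ₗ (Δ).rTensor B := by
    rw [LinearMap.rTensor_comp_lTensor, LinearMap.lTensor_comp_rTensor]
  have h2 : (Δ).rTensor (B ⊗[k] B) ∘ₗ R3 k B
      = (Δ).lTensor (B ⊗[k] B) ∘ₗ (alphaE k B).symm.toLinearMap ∘ₗ R3 k B := by
    rw [show (Δ).rTensor (B ⊗[k] B) ∘ₗ R3 k B
        = ((Δ).rTensor (B ⊗[k] B) ∘ₗ (Δ).lTensor B) ∘ₗ Δ from rfl, h1]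
    rw [show (alphaE k B).symm.toLinearMap ∘ₗ R3 k B
        = ((alphaE k B).symm.toLinearMap ∘ₗ (Δ).lTensor B ∘ₗ Δ) from rfl]
    rw [Coalgebra.coassoc_symm]
    rfl
  rw [h2, show (alphaE k B).symm.toLinearMap ∘ₗ R3 k B
      = (alphaE k B).symm.toLinearMap ∘ₗ R3 k B from rfl,
    ← LinearMap.comp_assoc, PN2, LinearMap.comp_assoc, ← R4_eq]

lemma GC1' : (Δ).rTensor (B ⊗[k] (B ⊗[k] B)) ∘ₗ R4 k B
    = (rho2 k B).toLinearMap ∘ₗ R5 k B := by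
  have h1 : (Δ).rTensor (B ⊗[k] (B ⊗[k] B)) ∘ₗ (R3 k B).lTensor B
      = (R3 k B).lTensor (B ⊗[k] B) ∘ₗ (Δ).rTensor B := by
    rw [LinearMap.rTensor_comp_lTensor, LinearMap.lTensor_comp_rTensor]
  have h2 : (Δ).rTensor (B ⊗[k] (B ⊗[k] B)) ∘ₗ R4 k B
      = (R3 k B).lTensor (B ⊗[k] B) ∘ₗ (alphaE k B).symm.toLinearMap ∘ₗ R3 k B := by
    rw [show (Δ).rTensor (B ⊗[k] (B ⊗[k] B)) ∘ₗ R4 k B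
        = ((Δ).rTensor (B ⊗[k] (B ⊗[k] B)) ∘ₗ (R3 k B).lTensor B) ∘ₗ Δ from rfl, h1]
    rw [show (alphaE k B).symm.toLinearMap ∘ₗ R3 k B
        = ((alphaE k B).symm.toLinearMap ∘ₗ (Δ).lTensor B ∘ₗ Δ) from rfl]
    rw [Coalgebra.coassoc_symm]
    rfl
  rw [h2, ← LinearMap.comp_assoc, PN2', LinearMap.comp_assoc, ← R5_eq]


lemma GC2 (b : B) :
    LinearMap.lTensor B ((Δ).rTensor (B ⊗[k] B)) (R4 k B b)
      = LinearMap.lTensor B (rho k B).toLinearMap (R5 k B b) := by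
  have : LinearMap.lTensor B ((Δ).rTensor (B ⊗[k] B)) ∘ₗ R4 k B
      = LinearMap.lTensor B (rho k B).toLinearMap ∘ₗ R5 k B := by
    rw [show R4 k B = (R3 k B).lTensor B ∘ₗ Δ from rfl,
      show R5 k B = (R4 k B).lTensor B ∘ₗ Δ from rfl,
      ← LinearMap.comp_assoc, ← LinearMap.comp_assoc,
      ← LinearMap.lTensor_comp, ← LinearMap.lTensor_comp, GC1]
  exact LinearMap.congr_fun this b

/-- THE KEY five-fold coassociativity identity -/
lemma KEY (b : B) :
    sig3 k B (LinearMap.rTensor B (LinearMap.lTensor B (D2' k B)) (D2' k B b))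
      = sig1 k B ((TensorProduct.map (TensorProduct.map Δ LinearMap.id) Δ)
          (D2' k B b)) := by
  -- LHS
  have l1 : sig3 k B (LinearMap.rTensor B (LinearMap.lTensor B (D2' k B)) (D2' k B b))
      = LinearMap.rTensor (B ⊗[k] B) (D2' k B) (tau k B (D2' k B b)) :=
    LinearMap.congr_fun (PN0 k B) (D2' k B b)
  have l2 : tau k B (D2' k B b) = TensorProduct.leftComm k B B B (R3 k B b) := by
    have : (tau k B).toLinearMap ∘ₗ D2' k B
        = (TensorProduct.leftComm k B B B).toLinearMap ∘ₗ R3 k B := by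
      rw [show (tau k B).toLinearMap
          = (TensorProduct.leftComm k B B B).toLinearMap ∘ₗ (alphaE k B).toLinearMap
          from rfl, LinearMap.comp_assoc,
        show (alphaE k B).toLinearMap ∘ₗ D2' k B
          = (alphaE k B).toLinearMap ∘ₗ (Δ).rTensor B ∘ₗ Δ from rfl]
      rw [Coalgebra.coassoc]
    exact LinearMap.congr_fun this b
  have l3 : LinearMap.rTensor (B ⊗[k] B) (D2' k B)
        (TensorProduct.leftComm k B B B (R3 k B b))
      = LinearMap.rTensor (B ⊗[k] B) ((Δ).rTensor B)
          (LinearMap.rTensor (B ⊗[k] B) Δ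
            (TensorProduct.leftComm k B B B (R3 k B b))) := by
    rw [← LinearMap.rTensor_comp_apply]; rfl
  have l4 : LinearMap.rTensor (B ⊗[k] B) Δ (TensorProduct.leftComm k B B B (R3 k B b))
      = zeta k B (LinearMap.lTensor B ((Δ).rTensor B) (R3 k B b)) :=
    LinearMap.congr_fun (PN1 k B) (R3 k B b)
  have l5 : LinearMap.lTensor B ((Δ).rTensor B) (R3 k B b)
      = LinearMap.lTensor B (alphaE k B).symm.toLinearMap (R4 k B b) := by
    have : LinearMap.lTensor B ((Δ).rTensor B) ∘ₗ R3 k B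
        = LinearMap.lTensor B (alphaE k B).symm.toLinearMap ∘ₗ R4 k B := by
      rw [show R3 k B = (Δ).lTensor B ∘ₗ Δ from rfl, ← LinearMap.comp_assoc,
        ← LinearMap.lTensor_comp,
        show (Δ).rTensor B ∘ₗ Δ = (alphaE k B).symm.toLinearMap ∘ₗ
          ((Δ).lTensor B ∘ₗ Δ) from (Coalgebra.coassoc_symm).symm,
        LinearMap.lTensor_comp,
        show R4 k B = (R3 k B).lTensor B ∘ₗ Δ from rfl, ← LinearMap.comp_assoc]
    exact LinearMap.congr_fun this b
  have l6 : LinearMap.rTensor (B ⊗[k] B) ((Δ).rTensor B)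
        (zeta k B (LinearMap.lTensor B (alphaE k B).symm.toLinearMap (R4 k B b)))
      = PN3e k B (LinearMap.lTensor B ((Δ).rTensor (B ⊗[k] B)) (R4 k B b)) :=
    LinearMap.congr_fun (PN3claim k B) (R4 k B b)
  rw [l1, l2, l3, l4, l5, l6, GC2]
  -- RHS
  have r1 : (TensorProduct.map (TensorProduct.map Δ LinearMap.id) Δ) (D2' k B b)
      = LinearMap.rTensor (B ⊗[k] B) (D2' k B) (R3 k B b) := by
    have : (TensorProduct.map (TensorProduct.map Δ (LinearMap.id (M := B))) Δ) ∘ₗ D2' k B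
        = LinearMap.rTensor (B ⊗[k] B) (D2' k B) ∘ₗ R3 k B := by
      rw [show D2' k B = (Δ).rTensor B ∘ₗ Δ from rfl, ← LinearMap.comp_assoc,
        show R3 k B = (Δ).lTensor B ∘ₗ Δ from rfl, ← LinearMap.comp_assoc,
        LinearMap.rTensor_comp_lTensor]
      congr 1
      rw [show LinearMap.rTensor B (Δ) = TensorProduct.map Δ LinearMap.id from rfl,
        ← TensorProduct.map_comp]
      rfl
    exact (LinearMap.congr_fun this b)
  have r2 : LinearMap.rTensor (B ⊗[k] B) (D2' k B) (R3 k B b)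
      = LinearMap.rTensor (B ⊗[k] B) ((Δ).rTensor B)
          (rho k B (R4 k B b)) := by
    have h1 : LinearMap.rTensor (B ⊗[k] B) Δ (R3 k B b) = rho k B (R4 k B b) :=
      LinearMap.congr_fun (GC1 k B) b
    rw [show D2' k B = (Δ).rTensor B ∘ₗ Δ from rfl, LinearMap.rTensor_comp,
      LinearMap.comp_apply, h1]
  have r3 : LinearMap.rTensor (B ⊗[k] B) ((Δ).rTensor B) (rho k B (R4 k B b))
      = kappa k B (LinearMap.rTensor (B ⊗[k] (B ⊗[k] B)) Δ (R4 k B b)) :=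
    LinearMap.congr_fun (PNkappa k B) (R4 k B b)
  have r4 : LinearMap.rTensor (B ⊗[k] (B ⊗[k] B)) Δ (R4 k B b)
      = rho2 k B (R5 k B b) := LinearMap.congr_fun (GC1' k B) b
  rw [r1, r2, r3, r4]
  exact LinearMap.congr_fun (PN6 k B) (R5 k B b)



variable (A : Type*) [Ring A] [Algebra k A] [Module B A]
    [IsScalarTower k B A] [SMulCommClass k B A]

lemma exists_rep2 (w : B ⊗[k] B) :
    ∃ (n : ℕ) (x y : Fin n → B), w = ∑ i, x i ⊗ₜ[k] y i := by
  induction w with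
  | zero => exact ⟨0, ![], ![], by simp⟩
  | tmul x y => exact ⟨1, ![x], ![y], by simp⟩
  | add u v hu hv =>
    obtain ⟨n, x, y, rfl⟩ := hu
    obtain ⟨m, x', y', rfl⟩ := hv
    refine ⟨n + m, Fin.append x x', Fin.append y y', ?_⟩
    rw [Fin.sum_univ_add]
    simp [Fin.append_left, Fin.append_right]

lemma exists_rep3 (w : (B ⊗[k] B) ⊗[k] B) :
    ∃ (n : ℕ) (x y z : Fin n → B), w = ∑ i, (x i ⊗ₜ[k] y i) ⊗ₜ[k] z i := by
  induction w with
  | zero => exact ⟨0, ![], ![], ![], by simp⟩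
  | tmul t z =>
    obtain ⟨n, x, y, rfl⟩ := exists_rep2 k B t
    exact ⟨n, x, y, fun _ => z, by rw [TensorProduct.sum_tmul]⟩
  | add u v hu hv =>
    obtain ⟨n, x, y, z, rfl⟩ := hu
    obtain ⟨m, x', y', z', rfl⟩ := hv
    refine ⟨n + m, Fin.append x x', Fin.append y y', Fin.append z z', ?_⟩
    rw [Fin.sum_univ_add]
    simp [Fin.append_left, Fin.append_right]

lemma map_comul_id_mul (s t : B ⊗[k] B) :
    (TensorProduct.map (Coalgebra.comul (R := k)) (LinearMap.id (M := B))) (s * t)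
      = (TensorProduct.map (Coalgebra.comul (R := k)) LinearMap.id) s
        * (TensorProduct.map (Coalgebra.comul (R := k)) LinearMap.id) t := by
  have h : (TensorProduct.map (Coalgebra.comul (R := k)) (LinearMap.id (M := B)))
      = (Algebra.TensorProduct.map (Bialgebra.comulAlgHom k B)
          (AlgHom.id k B)).toLinearMap := by
    apply TensorProduct.ext'
    intro x y
    simp [Bialgebra.comulAlgHom]
  rw [h]
  simp only [AlgHom.toLinearMap_apply, map_mul]

lemma D2'_mul (x y : B) : D2' k B (x * y) = D2' k B x * D2' k B y := by
  simp only [D2', LinearMap.comp_apply, Bialgebra.comul_mul]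
  exact map_comul_id_mul k B _ _

def act (a : A) : B →ₗ[k] A where
  toFun b := b • a
  map_add' x y := add_smul x y a
  map_smul' c x := smul_assoc c x a

@[simp] lemma act_apply (a : A) (b : B) : act k B A a b = b • a := rfl

/-- the swap `(x ⊗ y) ⊗ z ↦ (x ⊗ z) ⊗ y` -/
def swapYZ : (B ⊗[k] B) ⊗[k] B ≃ₗ[k] (B ⊗[k] B) ⊗[k] B :=
  (TensorProduct.assoc k B B B).trans
    ((TensorProduct.congr (LinearEquiv.refl k B) (TensorProduct.comm k B B)).trans
      (TensorProduct.assoc k B B B).symm)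

@[simp] lemma swapYZ_tmul (x y z : B) :
    swapYZ k B ((x ⊗ₜ[k] y) ⊗ₜ[k] z) = (x ⊗ₜ[k] z) ⊗ₜ[k] y := by
  simp [swapYZ]

/-- `T a₁ a₁' a₂ a₂' b'` sends `(x ⊗ y) ⊗ z` to
`(a₁ * (x • a₂)) ⊗ ((z • a₂') * a₁') ⊗ (y * b')`. -/
def T (a₁ a₁' a₂ a₂' : A) (b' : B) : (B ⊗[k] B) ⊗[k] B →ₗ[k] (A ⊗[k] A) ⊗[k] B :=
  (TensorProduct.map
      (TensorProduct.map ((LinearMap.mulLeft k a₁) ∘ₗ act k B A a₂)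
        ((LinearMap.mulRight k a₁') ∘ₗ act k B A a₂'))
      (LinearMap.mulRight k b')) ∘ₗ (swapYZ k B).toLinearMap

@[simp] lemma T_tmul (a₁ a₁' a₂ a₂' : A) (b' : B) (x y z : B) :
    T k B A a₁ a₁' a₂ a₂' b' ((x ⊗ₜ[k] y) ⊗ₜ[k] z)
      = ((a₁ * (x • a₂)) ⊗ₜ[k] ((z • a₂') * a₁')) ⊗ₜ[k] (y * b') := by
  simp [T]

/-- permutation `((f₂⊗f₃)⊗f₄)⊗(e₁⊗e₅) ↦ ((e₁⊗f₂)⊗(f₄⊗e₅))⊗f₃` -/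
def sig2 : ((B ⊗[k] B) ⊗[k] B) ⊗[k] (B ⊗[k] B) ≃ₗ[k]
    ((B ⊗[k] B) ⊗[k] (B ⊗[k] B)) ⊗[k] B :=
  (TensorProduct.comm k ((B ⊗[k] B) ⊗[k] B) (B ⊗[k] B)).trans <|
  (TensorProduct.congr (LinearEquiv.refl k (B ⊗[k] B))
      (TensorProduct.assoc k B B B)).trans <|
  (TensorProduct.tensorTensorTensorComm k B B B (B ⊗[k] B)).trans <|
  (TensorProduct.congr (LinearEquiv.refl k (B ⊗[k] B))
      ((TensorProduct.leftComm k B B B).trans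
        (TensorProduct.congr (LinearEquiv.refl k B) (TensorProduct.comm k B B)))).trans <|
  (TensorProduct.leftComm k (B ⊗[k] B) B (B ⊗[k] B)).trans
    (TensorProduct.comm k B ((B ⊗[k] B) ⊗[k] (B ⊗[k] B)))

@[simp] lemma sig2_tmul (f2 f3 f4 e1 e5 : B) :
    sig2 k B (((f2 ⊗ₜ[k] f3) ⊗ₜ[k] f4) ⊗ₜ[k] (e1 ⊗ₜ[k] e5))
      = ((e1 ⊗ₜ[k] f2) ⊗ₜ[k] (f4 ⊗ₜ[k] e5)) ⊗ₜ[k] f3 := by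
  simp [sig2]

/-- the five-fold assembly map -/
def Theta (a₁ a₁' a₂ a₂' a₃ a₃' : A) (b₃ : B) :
    ((B ⊗[k] B) ⊗[k] B) ⊗[k] (B ⊗[k] B) →ₗ[k] (A ⊗[k] A) ⊗[k] B :=
  (TensorProduct.map
    (TensorProduct.map
      ((LinearMap.mul' k A) ∘ₗ TensorProduct.map
        ((LinearMap.mulLeft k a₁) ∘ₗ act k B A a₂) (act k B A a₃))
      ((LinearMap.mul' k A) ∘ₗ TensorProduct.map
        (act k B A a₃') ((LinearMap.mulRight k a₁') ∘ₗ act k B A a₂')))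
    (LinearMap.mulRight k b₃)) ∘ₗ (sig2 k B).toLinearMap

@[simp] lemma Theta_tmul (a₁ a₁' a₂ a₂' a₃ a₃' : A) (b₃ : B) (f2 f3 f4 e1 e5 : B) :
    Theta k B A a₁ a₁' a₂ a₂' a₃ a₃' b₃ (((f2 ⊗ₜ[k] f3) ⊗ₜ[k] f4) ⊗ₜ[k] (e1 ⊗ₜ[k] e5))
      = (((a₁ * (e1 • a₂)) * (f2 • a₃)) ⊗ₜ[k] ((f4 • a₃') * ((e5 • a₂') * a₁')))
          ⊗ₜ[k] (f3 * b₃) := by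
  simp [Theta]

/-- `Xi v : s ↦ Theta (rTensor (·* s) v)`. -/
def Xi (a₁ a₁' a₂ a₂' a₃ a₃' : A) (b₃ : B)
    (v : ((B ⊗[k] B) ⊗[k] B) ⊗[k] (B ⊗[k] B)) :
    ((B ⊗[k] B) ⊗[k] B) →ₗ[k] (A ⊗[k] A) ⊗[k] B where
  toFun s := Theta k B A a₁ a₁' a₂ a₂' a₃ a₃' b₃
    (LinearMap.rTensor (B ⊗[k] B) (LinearMap.mulRight k s) v)
  map_add' s t := by
    have h : (LinearMap.mulRight k (s + t) : (B ⊗[k] B) ⊗[k] B →ₗ[k] _)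
        = LinearMap.mulRight k s + LinearMap.mulRight k t := by
      apply LinearMap.ext; intro u; simp [mul_add]
    simp only [h, LinearMap.rTensor_add, LinearMap.add_apply, map_add]
  map_smul' c s := by
    have h : (LinearMap.mulRight k (c • s) : (B ⊗[k] B) ⊗[k] B →ₗ[k] _)
        = c • LinearMap.mulRight k s := by
      apply LinearMap.ext; intro u; simp [mul_smul_comm]
    simp only [h, LinearMap.rTensor_smul, LinearMap.smul_apply, map_smul,
      RingHom.id_apply]

@[simp] lemma Xi_apply (a₁ a₁' a₂ a₂' a₃ a₃' : A) (b₃ : B)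
    (v : ((B ⊗[k] B) ⊗[k] B) ⊗[k] (B ⊗[k] B)) (s : (B ⊗[k] B) ⊗[k] B) :
    Xi k B A a₁ a₁' a₂ a₂' a₃ a₃' b₃ v s
      = Theta k B A a₁ a₁' a₂ a₂' a₃ a₃' b₃
          (LinearMap.rTensor (B ⊗[k] B) (LinearMap.mulRight k s) v) := rfl

/-- `T c c' a₃ a₃' b₃ t = Theta (t ⊗ (x ⊗ z))` when `c = a₁ * (x•a₂)`,
`c' = (z•a₂') * a₁'`. -/
lemma T_eq_Theta (a₁ a₁' a₂ a₂' a₃ a₃' : A) (b₃ : B) (x z : B) :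
    T k B A (a₁ * (x • a₂)) ((z • a₂') * a₁') a₃ a₃' b₃
      = Theta k B A a₁ a₁' a₂ a₂' a₃ a₃' b₃ ∘ₗ
          (TensorProduct.mk k ((B ⊗[k] B) ⊗[k] B) (B ⊗[k] B)).flip (x ⊗ₜ[k] z) := by
  ext P Q R
  simp

/-- the two-sided counit contraction `(x⊗y)⊗z ↦ ε(z)•(ε(x)•y)` -/
def phi : (B ⊗[k] B) ⊗[k] B →ₗ[k] B :=
  ((TensorProduct.rid k B).toLinearMap ∘ₗ (Coalgebra.counit (R := k) (A := B)).lTensor B) ∘ₗ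
    (((TensorProduct.lid k B).toLinearMap).rTensor B ∘ₗ
      ((Coalgebra.counit (R := k) (A := B)).rTensor B).rTensor B)

@[simp] lemma phi_tmul (x y z : B) :
    phi k B ((x ⊗ₜ[k] y) ⊗ₜ[k] z)
      = Coalgebra.counit (R := k) z • (Coalgebra.counit (R := k) x • y) := by
  simp [phi]

lemma phi_D2 (b : B) : phi k B (D2' k B b) = b := by
  have h1 : ((Coalgebra.counit (R := k) (A := B)).rTensor B).rTensor B
        (((Coalgebra.comul (R := k) (A := B)).rTensor B) (Coalgebra.comul (R := k) b))
      = (TensorProduct.mk k k B 1).rTensor B (Coalgebra.comul (R := k) b) := by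
    rw [← LinearMap.rTensor_comp_apply]
    rw [Coalgebra.rTensor_counit_comp_comul]
  have h2 : (TensorProduct.lid k B).toLinearMap ∘ₗ TensorProduct.mk k k B 1
      = LinearMap.id := by
    apply LinearMap.ext; intro b; simp
  have h3 : ((TensorProduct.lid k B).toLinearMap).rTensor B
        (((Coalgebra.counit (R := k) (A := B)).rTensor B).rTensor B
          (((Coalgebra.comul (R := k) (A := B)).rTensor B) (Coalgebra.comul (R := k) b)))
      = Coalgebra.comul (R := k) b := by
    rw [h1, ← LinearMap.rTensor_comp_apply, h2, LinearMap.rTensor_id, LinearMap.id_apply]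
  simp only [phi, LinearMap.comp_apply]
  rw [show D2' k B b
      = ((Coalgebra.comul (R := k) (A := B)).rTensor B) (Coalgebra.comul (R := k) b)
      from rfl]
  rw [h3, Coalgebra.lTensor_counit_comul]
  simp

section WithA

variable {k B}
variable {A : Type*} [Ring A] [Algebra k A] [Module B A]
    [IsScalarTower k B A] [SMulCommClass k B A]
variable (m : ((A ⊗[k] A) ⊗[k] B) →ₗ[k] ((A ⊗[k] A) ⊗[k] B) →ₗ[k] ((A ⊗[k] A) ⊗[k] B))

/-- rep-free form of the multiplication law -/
lemma hm'_lemma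
    (hm : ∀ (a₁ a₁' a₂ a₂' : A) (b b' : B) (n : ℕ) (x y z : Fin n → B),
      (TensorProduct.map (Coalgebra.comul (R := k)) LinearMap.id)
          (Coalgebra.comul (R := k) b) = ∑ i, (x i ⊗ₜ[k] y i) ⊗ₜ[k] z i →
      m ((a₁ ⊗ₜ[k] a₁') ⊗ₜ[k] b) ((a₂ ⊗ₜ[k] a₂') ⊗ₜ[k] b')
        = ∑ i, ((a₁ * (x i • a₂)) ⊗ₜ[k] ((z i • a₂') * a₁')) ⊗ₜ[k] (y i * b'))
    (a₁ a₁' a₂ a₂' : A) (b b' : B) :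
    m ((a₁ ⊗ₜ[k] a₁') ⊗ₜ[k] b) ((a₂ ⊗ₜ[k] a₂') ⊗ₜ[k] b')
      = T k B A a₁ a₁' a₂ a₂' b' (D2' k B b) := by
  obtain ⟨n, x, y, z, hrep⟩ := exists_rep3 k B (D2' k B b)
  rw [hm a₁ a₁' a₂ a₂' b b' n x y z hrep, hrep, map_sum]
  simp

variable (hm : ∀ (a₁ a₁' a₂ a₂' : A) (b b' : B) (n : ℕ) (x y z : Fin n → B),
      (TensorProduct.map (Coalgebra.comul (R := k)) LinearMap.id)
          (Coalgebra.comul (R := k) b) = ∑ i, (x i ⊗ₜ[k] y i) ⊗ₜ[k] z i →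
      m ((a₁ ⊗ₜ[k] a₁') ⊗ₜ[k] b) ((a₂ ⊗ₜ[k] a₂') ⊗ₜ[k] b')
        = ∑ i, ((a₁ * (x i • a₂)) ⊗ₜ[k] ((z i • a₂') * a₁')) ⊗ₜ[k] (y i * b'))
variable (hA : IsModuleAlgebra k B A)

include hA in
lemma claim1inner (a₁ a₁' a₂ a₂' a₃ a₃' : A) (b₃ : B) (p q r : B) :
    T k B A a₁ a₁' (a₂ * (p • a₃)) ((r • a₃') * a₂') (q * b₃)
      = Theta k B A a₁ a₁' a₂ a₂' a₃ a₃' b₃ ∘ₗ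
          LinearMap.rTensor (B ⊗[k] B)
            (LinearMap.mulRight k ((p ⊗ₜ[k] q) ⊗ₜ[k] r)) ∘ₗ
          (sig1 k B).toLinearMap ∘ₗ
          TensorProduct.map (TensorProduct.map (Coalgebra.comul (R := k)) LinearMap.id)
            (Coalgebra.comul (R := k)) := by
  ext x y z
  obtain ⟨n1, x1, x2, hx⟩ := exists_rep2 k B (Coalgebra.comul (R := k) x)
  obtain ⟨n2, z1, z2, hz⟩ := exists_rep2 k B (Coalgebra.comul (R := k) z)
  have hxs := hA.1 x a₂ (p • a₃) n1 x1 x2 hx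
  have hzs := hA.1 z (r • a₃') a₂' n2 z1 z2 hz
  simp only [TensorProduct.AlgebraTensorModule.curry_apply, TensorProduct.curry_apply,
    LinearMap.coe_restrictScalars, LinearMap.compr₂_apply,
    TensorProduct.mk_apply, LinearMap.comp_apply,
    TensorProduct.map_tmul, LinearMap.id_coe, id_eq, T_tmul]
  rw [hxs, hzs, hx, hz]
  simp only [TensorProduct.sum_tmul, TensorProduct.tmul_sum, map_sum,
    Finset.mul_sum, Finset.sum_mul, LinearEquiv.coe_toLinearMap, LinearEquiv.coe_coe,
    sig1_tmul, LinearMap.rTensor_tmul,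
    LinearMap.mulRight_apply, Algebra.TensorProduct.tmul_mul_tmul, Theta_tmul,
    mul_smul, mul_assoc]

include hm hA in
lemma claim1 (a₁ a₁' a₂ a₂' a₃ a₃' : A) (b₁ b₃ : B) :
    (m ((a₁ ⊗ₜ[k] a₁') ⊗ₜ[k] b₁)) ∘ₗ T k B A a₂ a₂' a₃ a₃' b₃
      = Xi k B A a₁ a₁' a₂ a₂' a₃ a₃' b₃
          (sig1 k B ((TensorProduct.map
              (TensorProduct.map (Coalgebra.comul (R := k)) LinearMap.id)
              (Coalgebra.comul (R := k))) (D2' k B b₁))) := by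
  ext p q r
  simp only [TensorProduct.AlgebraTensorModule.curry_apply, TensorProduct.curry_apply,
    LinearMap.coe_restrictScalars, LinearMap.compr₂_apply,
    TensorProduct.mk_apply, LinearMap.comp_apply, T_tmul, Xi_apply]
  rw [hm'_lemma m hm]
  have h := LinearMap.congr_fun
    (claim1inner hA a₁ a₁' a₂ a₂' a₃ a₃' b₃ p q r) (D2' k B b₁)
  simpa only [LinearMap.comp_apply, LinearEquiv.coe_coe] using h

include hm in
lemma claim2 (a₁ a₁' a₂ a₂' a₃ a₃' : A) (b₂ b₃ : B) :
    m.flip ((a₃ ⊗ₜ[k] a₃') ⊗ₜ[k] b₃) ∘ₗ T k B A a₁ a₁' a₂ a₂' b₂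
      = Theta k B A a₁ a₁' a₂ a₂' a₃ a₃' b₃ ∘ₗ
          LinearMap.rTensor (B ⊗[k] B) (LinearMap.mulRight k (D2' k B b₂)) ∘ₗ
          (sig3 k B).toLinearMap ∘ₗ
          LinearMap.rTensor B (LinearMap.lTensor B (D2' k B)) := by
  ext x y z
  simp only [TensorProduct.AlgebraTensorModule.curry_apply, TensorProduct.curry_apply,
    LinearMap.coe_restrictScalars, LinearMap.compr₂_apply,
    TensorProduct.mk_apply, LinearMap.comp_apply,
    T_tmul, LinearMap.flip_apply, LinearMap.rTensor_tmul, LinearMap.lTensor_tmul,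
    sig3_tmul, LinearMap.mulRight_apply]
  rw [hm'_lemma m hm, D2'_mul]
  have h := LinearMap.congr_fun
    (T_eq_Theta k B A a₁ a₁' a₂ a₂' a₃ a₃' b₃ x z) (D2' k B y * D2' k B b₂)
  simpa only [LinearMap.comp_apply, LinearMap.flip_apply, TensorProduct.mk_apply,
    LinearEquiv.coe_coe, sig3_tmul, LinearMap.rTensor_tmul, LinearMap.mulRight_apply] using h

include hm hA in
lemma assoc_pure (a₁ a₁' a₂ a₂' a₃ a₃' : A) (b₁ b₂ b₃ : B) :
    m (m ((a₁ ⊗ₜ[k] a₁') ⊗ₜ[k] b₁) ((a₂ ⊗ₜ[k] a₂') ⊗ₜ[k] b₂)) ((a₃ ⊗ₜ[k] a₃') ⊗ₜ[k] b₃)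
      = m ((a₁ ⊗ₜ[k] a₁') ⊗ₜ[k] b₁)
          (m ((a₂ ⊗ₜ[k] a₂') ⊗ₜ[k] b₂) ((a₃ ⊗ₜ[k] a₃') ⊗ₜ[k] b₃)) := by
  rw [hm'_lemma m hm a₁ a₁' a₂ a₂' b₁ b₂, hm'_lemma m hm a₂ a₂' a₃ a₃' b₂ b₃]
  have h2 := LinearMap.congr_fun
    (claim2 m hm a₁ a₁' a₂ a₂' a₃ a₃' b₂ b₃) (D2' k B b₁)
  simp only [LinearMap.comp_apply, LinearMap.flip_apply,
    LinearEquiv.coe_toLinearMap, LinearEquiv.coe_coe] at h2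
  have h1 := LinearMap.congr_fun
    (claim1 m hm hA a₁ a₁' a₂ a₂' a₃ a₃' b₁ b₃) (D2' k B b₂)
  simp only [LinearMap.comp_apply, Xi_apply,
    LinearEquiv.coe_toLinearMap, LinearEquiv.coe_coe] at h1
  rw [h2, h1, KEY k B b₁]

include hm in
lemma unit_left (a a' : A) (b : B) :
    m (((1 : A) ⊗ₜ[k] (1 : A)) ⊗ₜ[k] (1 : B)) ((a ⊗ₜ[k] a') ⊗ₜ[k] b)
      = (a ⊗ₜ[k] a') ⊗ₜ[k] b := by
  rw [hm'_lemma m hm 1 1 a a' 1 b]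
  have h1 : D2' k B (1 : B) = ((1 : B) ⊗ₜ[k] (1 : B)) ⊗ₜ[k] (1 : B) := by
    simp [D2', Algebra.TensorProduct.one_def]
  rw [h1, T_tmul]
  simp

include hm hA in
lemma unit_right (a a' : A) (b : B) :
    m ((a ⊗ₜ[k] a') ⊗ₜ[k] b) (((1 : A) ⊗ₜ[k] (1 : A)) ⊗ₜ[k] (1 : B))
      = (a ⊗ₜ[k] a') ⊗ₜ[k] b := by
  rw [hm'_lemma m hm a a' 1 1 b 1]
  obtain ⟨n, x, y, z, hrep⟩ := exists_rep3 k B (D2' k B b)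
  have hb : ∑ i, Coalgebra.counit (R := k) (z i) • (Coalgebra.counit (R := k) (x i) • y i)
      = b := by
    have h := congrArg (phi k B) hrep
    rw [phi_D2, map_sum] at h
    simp only [phi_tmul] at h
    exact h.symm
  rw [hrep, map_sum]
  calc ∑ i, T k B A a a' 1 1 1 ((x i ⊗ₜ[k] y i) ⊗ₜ[k] z i)
      = ∑ i, Coalgebra.counit (R := k) (z i) •
          (Coalgebra.counit (R := k) (x i) • ((a ⊗ₜ[k] a') ⊗ₜ[k] y i)) := by
        refine Finset.sum_congr rfl fun i _ => ?_
        rw [T_tmul, hA.2 (x i), hA.2 (z i)]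
        simp only [mul_smul_comm, smul_mul_assoc, mul_one, one_mul,
          TensorProduct.smul_tmul', TensorProduct.tmul_smul]
        try rw [smul_comm]
    _ = (a ⊗ₜ[k] a') ⊗ₜ[k] b := by
        rw [← hb]
        simp only [TensorProduct.tmul_smul, TensorProduct.tmul_sum]

end WithA

end CP

end CPAux

/-- the crossed product `Aᵉ ⋊ B`, i.e. `A ⊗ Aᵒᵖ ⊗ B` with multiplication
`(a₁⊗a₁'⊗b¹)(a₂⊗a₂'⊗b²) = a₁b¹₍₁₎(a₂) ⊗ b¹₍₃₎(a₂')a₁' ⊗ b¹₍₂₎b²`, is a unital associative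
algebra (any bilinear multiplication satisfying the defining formula is associative with
unit `1⊗1⊗1`). -/
theorem crossedProduct_isUnitalAssociative
    (B A : Type*) [Ring B] [Bialgebra k B] [Ring A] [Algebra k A] [Module B A]
    [IsScalarTower k B A] [SMulCommClass k B A]
    (hA : IsModuleAlgebra k B A)
    (m : ((A ⊗[k] A) ⊗[k] B) →ₗ[k] ((A ⊗[k] A) ⊗[k] B) →ₗ[k] ((A ⊗[k] A) ⊗[k] B))
    (hm : ∀ (a₁ a₁' a₂ a₂' : A) (b b' : B) (n : ℕ) (x y z : Fin n → B),
      (TensorProduct.map (Coalgebra.comul (R := k)) LinearMap.id)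
          (Coalgebra.comul (R := k) b) = ∑ i, (x i ⊗ₜ[k] y i) ⊗ₜ[k] z i →
      m ((a₁ ⊗ₜ[k] a₁') ⊗ₜ[k] b) ((a₂ ⊗ₜ[k] a₂') ⊗ₜ[k] b')
        = ∑ i, ((a₁ * (x i • a₂)) ⊗ₜ[k] ((z i • a₂') * a₁')) ⊗ₜ[k] (y i * b')) :
    (∀ u v w, m (m u v) w = m u (m v w)) ∧
    (∀ u, m (((1 : A) ⊗ₜ[k] (1 : A)) ⊗ₜ[k] (1 : B)) u = u ∧
          m u (((1 : A) ⊗ₜ[k] (1 : A)) ⊗ₜ[k] (1 : B)) = u) := by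
  constructor
  · intro u v w
    induction u using TensorProduct.induction_on with
    | zero => simp
    | add u1 u2 h1 h2 => simp only [map_add, LinearMap.add_apply, h1, h2]
    | tmul t1 b1 =>
      induction t1 using TensorProduct.induction_on with
      | zero => simp
      | add s1 s2 h1 h2 =>
        simp only [TensorProduct.add_tmul, map_add, LinearMap.add_apply, h1, h2]
      | tmul a₁ a₁' =>
        induction v using TensorProduct.induction_on with
        | zero => simp
        | add v1 v2 h1 h2 => simp only [map_add, LinearMap.add_apply, h1, h2]
        | tmul t2 b2 =>
          induction t2 using TensorProduct.induction_on with
          | zero => simp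
          | add s1 s2 h1 h2 =>
            simp only [TensorProduct.add_tmul, map_add, LinearMap.add_apply, h1, h2]
          | tmul a₂ a₂' =>
            induction w using TensorProduct.induction_on with
            | zero => simp
            | add w1 w2 h1 h2 => simp only [map_add, h1, h2]
            | tmul t3 b3 =>
              induction t3 using TensorProduct.induction_on with
              | zero => simp
              | add s1 s2 h1 h2 =>
                simp only [TensorProduct.add_tmul, map_add, h1, h2]
              | tmul a₃ a₃' =>
                exact CP.assoc_pure m hm hA a₁ a₁' a₂ a₂' a₃ a₃' b1 b2 b3
  · intro u
    constructor
    · induction u using TensorProduct.induction_on with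
      | zero => simp
      | add u1 u2 h1 h2 => simp only [map_add, h1, h2]
      | tmul t b =>
        induction t using TensorProduct.induction_on with
        | zero => simp
        | add s1 s2 h1 h2 => simp only [TensorProduct.add_tmul, map_add, h1, h2]
        | tmul a a' => exact CP.unit_left m hm a a' b
    · induction u using TensorProduct.induction_on with
      | zero => simp
      | add u1 u2 h1 h2 => simp only [map_add, LinearMap.add_apply, h1, h2]
      | tmul t b =>
        induction t using TensorProduct.induction_on with
        | zero => simp
        | add s1 s2 h1 h2 =>
          simp only [TensorProduct.add_tmul, map_add, LinearMap.add_apply, h1, h2]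
        | tmul a a' => exact CP.unit_right m hm hA a a' b

end
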